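/- arXiv:2402.02407 — 5 statements merged into one kernel-verified Lean document; each statement's English description precedes it below -/
import Mathlib

section
/- For any bounded convex polytope C ⊆ ℝᵈ enclosed by m hyperplanes and any ε > 0, there exists a two-layer ReLU network N(x) = v₀ + Σₖ₌₁ᵐ vₖ·ReLU(wₖᵀx + bₖ) with m hidden neurons such that N(x) = 1 for all x ∈ C, N(x) < 1 for all x ∉ C, and N(x) < 0 for all x outside the ε-neighborhood of C. -/
/-!
Fix `x₀` in the interior of `C`, write `gₖ x = ⟪wₖ, x⟫ + bₖ`, and let `sₖ = -gₖ x₀ ≥ 0` be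
the slack of `x₀`; it is positive for every constraint that is violated somewhere. If
`gₖ x ≤ t sₖ` for all `k`, then, the `gₖ` being affine, `x₀ + (x - x₀) / (1 + t)` lies in `C`,
so `x` is the image of a point of `C` under the homothety of ratio `1 + t` about `x₀`, hence
within `t · sup_{z ∈ C} ‖z - x₀‖` of `C`. Taking `t` small, outside the `ε`-neighbourhood some
constraint has `gₖ x > t sₖ`, and there the network `1 - ∑ₖ 2 / (t sₖ) · ReLU (gₖ x)` is
below `-1`.
-/

open Metric Set AffineMap Topology
open scoped InnerProductSpace

theorem homothety_image_subset_cthickening {E : Type*} [SeminormedAddCommGroup E]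
    [NormedSpace ℝ E] {C : Set E} {x₀ : E} {D t : ℝ}
    (hC : C ⊆ closedBall x₀ D) (ht : 0 ≤ t) :
    homothety x₀ (1 + t) '' C ⊆ cthickening (t * D) C := by
  rintro _ ⟨z, hz, rfl⟩
  refine mem_cthickening_of_dist_le _ z _ _ hz ?_
  rw [dist_homothety_self, sub_add_cancel_left, norm_neg, Real.norm_of_nonneg ht, dist_comm]
  exact mul_le_mul_of_nonneg_left (hC hz) ht

section Polytope

variable {E : Type*} [NormedAddCommGroup E] [InnerProductSpace ℝ E]

theorem inner_add_lt_zero_of_mem_interior {w x₀ x : E} {b : ℝ}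
    (hx₀ : x₀ ∈ interior {y | ⟪w, y⟫_ℝ + b ≤ 0}) (hx : 0 < ⟪w, x⟫_ℝ + b) :
    ⟪w, x₀⟫_ℝ + b < 0 := by
  have hw : w ≠ 0 := by
    rintro rfl
    have : b ≤ 0 := by simpa using interior_subset hx₀
    simp only [inner_zero_left, zero_add] at hx
    linarith
  have hray : Filter.Tendsto (fun τ : ℝ => x₀ + τ • w) (𝓝[>] 0) (𝓝 x₀) :=
    ((continuous_const.add (continuous_id.smul continuous_const)).tendsto' 0 x₀
      (by simp)).mono_left nhdsWithin_le_nhds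
  obtain ⟨τ, hτ, hτpos⟩ :=
    ((hray.eventually (mem_interior_iff_mem_nhds.mp hx₀)).and self_mem_nhdsWithin).exists
  have hstep : ⟪w, x₀⟫_ℝ + b + τ * ‖w‖ ^ 2 ≤ 0 := by
    simpa [inner_add_right, real_inner_smul_right, real_inner_self_eq_norm_sq, add_right_comm]
      using hτ
  have : 0 < τ * ‖w‖ ^ 2 := mul_pos hτpos (pow_pos (norm_pos_iff.2 hw) 2)
  linarith

theorem inner_homothety_inv_add_nonpos {w x₀ x : E} {b t : ℝ} (ht : 0 ≤ t)
    (hx : ⟪w, x⟫_ℝ + b ≤ -t * (⟪w, x₀⟫_ℝ + b)) :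
    ⟪w, homothety x₀ (1 + t)⁻¹ x⟫_ℝ + b ≤ 0 := by
  have hval : ⟪w, homothety x₀ (1 + t)⁻¹ x⟫_ℝ + b
      = (1 + t)⁻¹ * ((⟪w, x⟫_ℝ + b) + t * (⟪w, x₀⟫_ℝ + b)) := by
    rw [homothety_apply, vsub_eq_sub, vadd_eq_add, inner_add_right, real_inner_smul_right,
      inner_sub_right]
    field_simp
    ring
  rw [hval]
  exact mul_nonpos_of_nonneg_of_nonpos (by positivity) (by linarith)

def polytope {ι : Type*} (w : ι → E) (b : ι → ℝ) : Set E := ⋂ k, {x | ⟪w k, x⟫_ℝ + b k ≤ 0}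

variable {ι : Type*} {w : ι → E} {b : ι → ℝ} {x₀ x : E} {t : ℝ}

theorem mem_homothety_image_polytope (ht : 0 ≤ t)
    (hx : ∀ k, ⟪w k, x⟫_ℝ + b k ≤ -t * (⟪w k, x₀⟫_ℝ + b k)) :
    x ∈ homothety x₀ (1 + t) '' polytope w b := by
  refine ⟨homothety x₀ (1 + t)⁻¹ x,
    mem_iInter.2 fun k => inner_homothety_inv_add_nonpos ht (hx k), ?_⟩
  rw [← homothety_mul_apply, mul_inv_cancel₀ (by positivity), homothety_one, id_apply]

theorem exists_lt_of_notMem_thickening_polytope {D ε : ℝ}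
    (hD : polytope w b ⊆ closedBall x₀ D) (ht : 0 ≤ t) (hε : 0 < ε) (htD : t * D < ε)
    (hx : x ∉ thickening ε (polytope w b)) :
    ∃ k, -t * (⟪w k, x₀⟫_ℝ + b k) < ⟪w k, x⟫_ℝ + b k := by
  by_contra! h
  exact hx <| cthickening_subset_thickening' hε htD _ <|
    homothety_image_subset_cthickening hD ht (mem_homothety_image_polytope ht h)

theorem neg_mul_inner_add_pos_of_mem_interior (hx₀ : x₀ ∈ interior (polytope w b))
    (ht : 0 < t) {k : ι} (hx : 0 < ⟪w k, x⟫_ℝ + b k) : 0 < -t * (⟪w k, x₀⟫_ℝ + b k) := by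
  rw [neg_mul_comm]
  exact mul_pos ht <| neg_pos.2 <|
    inner_add_lt_zero_of_mem_interior (interior_mono (iInter_subset _ k) hx₀) hx

variable [Fintype ι]

noncomputable def polytopeNet (w : ι → E) (b : ι → ℝ) (x₀ : E) (t : ℝ) (x : E) : ℝ :=
  1 - ∑ k, 2 / (-t * (⟪w k, x₀⟫_ℝ + b k)) * max (⟪w k, x⟫_ℝ + b k) 0

theorem polytopeNet_eq_one (hx : x ∈ polytope w b) : polytopeNet w b x₀ t x = 1 := by
  have hx' (k : ι) : ⟪w k, x⟫_ℝ + b k ≤ 0 := mem_iInter.1 hx k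
  simp [polytopeNet, max_eq_right (hx' _)]

theorem polytopeNet_le_one_sub (hx₀ : x₀ ∈ polytope w b) (ht : 0 ≤ t) (k : ι) :
    polytopeNet w b x₀ t x ≤ 1 - 2 / (-t * (⟪w k, x₀⟫_ℝ + b k)) * max (⟪w k, x⟫_ℝ + b k) 0 := by
  have hterm (j : ι) : 0 ≤ 2 / (-t * (⟪w j, x₀⟫_ℝ + b j)) * max (⟪w j, x⟫_ℝ + b j) 0 :=
    mul_nonneg (div_nonneg zero_le_two (mul_nonneg_of_nonpos_of_nonpos (neg_nonpos.2 ht)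
      (mem_iInter.1 hx₀ j))) (le_max_right _ _)
  exact sub_le_sub_left (Finset.single_le_sum (fun j _ => hterm j) (Finset.mem_univ k)) 1

theorem polytopeNet_lt_one (hx₀ : x₀ ∈ interior (polytope w b)) (ht : 0 < t)
    (hx : x ∉ polytope w b) : polytopeNet w b x₀ t x < 1 := by
  obtain ⟨k, hk⟩ : ∃ k, 0 < ⟪w k, x⟫_ℝ + b k := by simpa [polytope] using hx
  have hterm : 0 < 2 / (-t * (⟪w k, x₀⟫_ℝ + b k)) * max (⟪w k, x⟫_ℝ + b k) 0 :=
    mul_pos (div_pos two_pos (neg_mul_inner_add_pos_of_mem_interior hx₀ ht hk))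
      (lt_max_of_lt_left hk)
  linarith [polytopeNet_le_one_sub (interior_subset hx₀) ht.le k (x := x)]

theorem polytopeNet_lt_neg_one (hx₀ : x₀ ∈ interior (polytope w b)) (ht : 0 < t) {k : ι}
    (hk : -t * (⟪w k, x₀⟫_ℝ + b k) < ⟪w k, x⟫_ℝ + b k) : polytopeNet w b x₀ t x < -1 := by
  have hslack : 0 ≤ -t * (⟪w k, x₀⟫_ℝ + b k) :=
    mul_nonneg_of_nonpos_of_nonpos (neg_nonpos.2 ht.le) (mem_iInter.1 (interior_subset hx₀) k)
  have hpos := neg_mul_inner_add_pos_of_mem_interior hx₀ ht (hslack.trans_lt hk)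
  have hterm : 2 < 2 / (-t * (⟪w k, x₀⟫_ℝ + b k)) * max (⟪w k, x⟫_ℝ + b k) 0 := by
    rw [max_eq_left (hslack.trans hk.le), div_mul_eq_mul_div, lt_div_iff₀ hpos]
    linarith
  linarith [polytopeNet_le_one_sub (interior_subset hx₀) ht.le k (x := x)]

end Polytope

/-- For any bounded convex polytope `C ⊆ ℝ^d` given by `m` half-spaces and any `ε > 0`
there is a two-layer ReLU network with `m` hidden neurons equal to `1` on `C`,
`< 1` off `C`, and `< 0` outside the `ε`-neighborhood of `C`. -/
theorem two_layer_relu_network_for_polytope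
    (d m : ℕ)
    (w : Fin m → EuclideanSpace ℝ (Fin d)) (b : Fin m → ℝ)
    (C : Set (EuclideanSpace ℝ (Fin d)))
    (hC : C = ⋂ k, {x | (inner ℝ (w k) x : ℝ) + b k ≤ 0})
    (hCbdd : Bornology.IsBounded C)
    (hCint : (interior C).Nonempty)
    (ε : ℝ) (hε : 0 < ε) :
    ∃ (N : EuclideanSpace ℝ (Fin d) → ℝ) (v₀ : ℝ) (v : Fin m → ℝ)
      (w' : Fin m → EuclideanSpace ℝ (Fin d)) (b' : Fin m → ℝ),
      (∀ x, N x = v₀ + ∑ k, v k * max ((inner ℝ (w' k) x : ℝ) + b' k) 0) ∧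
      (∀ x ∈ C, N x = 1) ∧
      (∀ x ∉ C, N x < 1) ∧
      (∀ x ∉ Metric.thickening ε C, N x < 0) := by
  change C = polytope w b at hC
  subst hC
  obtain ⟨x₀, hx₀⟩ := hCint
  obtain ⟨D, hD, hCD⟩ := hCbdd.subset_closedBall_lt 0 x₀
  set t := ε / (2 * D)
  have ht : 0 < t := by positivity
  have htD : t * D < ε := by
    rw [div_mul_eq_mul_div, div_lt_iff₀ (by positivity)]
    nlinarith
  refine ⟨polytopeNet w b x₀ t, 1, fun k => -(2 / (-t * (⟪w k, x₀⟫_ℝ + b k))), w, b,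
    fun x => by simp [polytopeNet, sub_eq_add_neg], fun x hx => polytopeNet_eq_one hx,
    fun x hx => polytopeNet_lt_one hx₀ ht hx, fun x hx => ?_⟩
  obtain ⟨k, hk⟩ := exists_lt_of_notMem_thickening_polytope hCD ht.le hε htD hx
  linarith [polytopeNet_lt_neg_one hx₀ ht hk]
end

section
/- Let 0 ≤ m ≤ d and let Δᵐ be an m-simplex in ℝᵈ. For every ε > 0 there exists a two-layer ReLU network T: ℝᵈ → ℝ with d+1 hidden neurons such that T(x) = 1 for all x ∈ Δᵐ, T(x) ≤ 1 for all x in the ε-neighborhood of Δᵐ, and T(x) < 0 for all x outside the ε-neighborhood of Δᵐ. -/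
open Set Metric

/-! Extend `Δᵐ` to a full-dimensional simplex whose extra vertices lie in the `ε`-neighbourhood of
`Δᵐ`. If `λ₀, …, λ_d` are its barycentric coordinates, `g = ∑ ReLU(-λᵢ)` is a network of `d + 1`
neurons vanishing exactly on the big simplex, which contains `Δᵐ` and lies in the
`ε`-neighbourhood. Since `∑ |λᵢ| = 1 + 2g`, the function `g` is coercive, so it has a positive
minimum `δ` outside the `ε`-neighbourhood, and `T = 1 - (2 / δ) g` does the job. -/

theorem Continuous.exists_pos_le_of_isCompact_sublevel {X : Type*} [TopologicalSpace X]
    {f : X → ℝ} (hf : Continuous f) (hK : IsCompact {x | f x ≤ 1}) {S : Set X}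
    (hS : IsClosed S) (hpos : ∀ x ∈ S, 0 < f x) : ∃ δ > 0, ∀ x ∈ S, δ ≤ f x := by
  obtain ⟨a, ha, hle⟩ := (hK.inter_left hS).exists_forall_le' hf.continuousOn
    fun x hx => hpos x hx.1
  refine ⟨min a 1, lt_min ha one_pos, fun x hx => ?_⟩
  by_cases hx1 : f x ≤ 1
  · exact (min_le_left _ _).trans (hle x ⟨hx, hx1⟩)
  · exact (min_le_right _ _).trans (not_le.1 hx1).le

theorem AffineMap.exists_inner_add_eq {E : Type*} [NormedAddCommGroup E] [InnerProductSpace ℝ E]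
    [FiniteDimensional ℝ E] (f : E →ᵃ[ℝ] ℝ) : ∃ (w : E) (b : ℝ), ∀ x, f x = inner ℝ w x + b :=
  ⟨(InnerProductSpace.toDual ℝ E).symm (LinearMap.toContinuousLinearMap f.linear), f 0,
    fun x => by simpa [InnerProductSpace.toDual_symm_apply] using f.map_vadd 0 x⟩

theorem AffineIndependent.exists_affineBasis_subset_thickening {ι ι' E : Type*} [Nonempty ι]
    [Fintype ι'] [NormedAddCommGroup E] [NormedSpace ℝ E] [FiniteDimensional ℝ E]
    (hcard : Fintype.card ι' = Module.finrank ℝ E + 1) {p : ι → E} (hp : AffineIndependent ℝ p)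
    {ε : ℝ} (hε : 0 < ε) :
    ∃ B : AffineBasis ι' ℝ E,
      range p ⊆ range B ∧ range B ⊆ thickening ε (convexHull ℝ (range p)) := by
  obtain ⟨t, hpt, htε, ht, hspan⟩ := isOpen_thickening.exists_between_affineIndependent_span_eq_top
    ((subset_convexHull ℝ _).trans (self_subset_thickening hε _)) (range_nonempty p) hp.range
  have : Fintype t := (finite_set_of_fin_dim_affineIndependent ℝ ht).fintype
  rw [← Subtype.range_coe (s := t)] at hspan
  have ht_card : Fintype.card t = Fintype.card ι' :=
    hcard ▸ ht.affineSpan_eq_top_iff_card_eq_finrank_add_one.1 hspan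
  let B : AffineBasis t ℝ E := ⟨(↑), ht, hspan⟩
  refine ⟨B.reindex (Fintype.equivOfCardEq ht_card), ?_⟩
  rw [AffineBasis.coe_reindex, (Equiv.surjective _).range_comp]
  exact ⟨hpt.trans Subtype.range_coe.superset, Subtype.range_coe.subset.trans htε⟩

namespace AffineBasis

variable {ι E : Type*} [Fintype ι] [NormedAddCommGroup E] [NormedSpace ℝ E]
  (B : AffineBasis ι ℝ E)

noncomputable def negPartCoordSum (x : E) : ℝ := ∑ i, (B.coord i x)⁻

theorem negPartCoordSum_nonneg (x : E) : 0 ≤ B.negPartCoordSum x :=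
  Finset.sum_nonneg fun _ _ => negPart_nonneg _

theorem negPartCoordSum_eq_zero_iff {x : E} :
    B.negPartCoordSum x = 0 ↔ x ∈ convexHull ℝ (range B) := by
  rw [B.convexHull_eq_nonneg_coord, negPartCoordSum,
    Finset.sum_eq_zero_iff_of_nonneg fun _ _ => negPart_nonneg _]
  simp

theorem sum_abs_coord (x : E) : ∑ i, |B.coord i x| = 1 + 2 * B.negPartCoordSum x := by
  have h : ∀ i, |B.coord i x| = B.coord i x + 2 * (B.coord i x)⁻ := fun i => by
    linarith [two_nsmul (B.coord i x)⁻ ▸ abs_sub_eq_two_nsmul_negPart (B.coord i x)]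
  simp only [h, Finset.sum_add_distrib, B.sum_coord_apply_eq_one, negPartCoordSum, Finset.mul_sum]

theorem norm_le_mul_negPartCoordSum (x : E) :
    ‖x‖ ≤ (∑ i, ‖B i‖) * (1 + 2 * B.negPartCoordSum x) := by
  calc ‖x‖ = ‖∑ i, B.coord i x • B i‖ := by rw [B.linear_combination_coord_eq_self]
    _ ≤ ∑ i, |B.coord i x| * ‖B i‖ := (norm_sum_le _ _).trans_eq (by simp [norm_smul])
    _ ≤ ∑ i, |B.coord i x| * ∑ j, ‖B j‖ := by
      gcongr with i
      exact Finset.single_le_sum (fun j _ => norm_nonneg (B j)) (Finset.mem_univ i)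
    _ = _ := by rw [← Finset.sum_mul, sum_abs_coord, mul_comm]

theorem continuous_negPartCoordSum : Continuous B.negPartCoordSum := by
  have := B.finiteDimensional
  exact continuous_finsetSum _ fun i _ =>
    (continuous_barycentric_coord B i).neg.sup continuous_const

theorem isCompact_negPartCoordSum_le (c : ℝ) : IsCompact {x | B.negPartCoordSum x ≤ c} := by
  have := B.finiteDimensional
  refine isCompact_of_isClosed_isBounded
    (isClosed_le B.continuous_negPartCoordSum continuous_const) ?_
  refine isBounded_iff_forall_norm_le.2 ⟨(∑ i, ‖B i‖) * (1 + 2 * c), fun x hx => ?_⟩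
  have hB : 0 ≤ ∑ i, ‖B i‖ := Finset.sum_nonneg fun i _ => norm_nonneg (B i)
  exact (B.norm_le_mul_negPartCoordSum x).trans (by gcongr; exact hx)

end AffineBasis

theorem two_layer_network_for_simplex_general
    (d m : ℕ)
    (pts : Fin (m + 1) → EuclideanSpace ℝ (Fin d))
    (hpts : AffineIndependent ℝ pts)
    (ε : ℝ) (hε : 0 < ε) :
    ∃ (T : EuclideanSpace ℝ (Fin d) → ℝ) (v₀ : ℝ) (v : Fin (d + 1) → ℝ)
      (w : Fin (d + 1) → EuclideanSpace ℝ (Fin d)) (b : Fin (d + 1) → ℝ),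
      (∀ x, T x = v₀ + ∑ i, v i * max ((inner ℝ (w i) x : ℝ) + b i) 0) ∧
      (∀ x ∈ convexHull ℝ (Set.range pts), T x = 1) ∧
      (∀ x ∈ Metric.thickening ε (convexHull ℝ (Set.range pts)), T x ≤ 1) ∧
      (∀ x ∉ Metric.thickening ε (convexHull ℝ (Set.range pts)), T x < 0) := by
  obtain ⟨B, hpB, hBε⟩ :=
    hpts.exists_affineBasis_subset_thickening (ι' := Fin (d + 1)) (by simp) hε
  set g := B.negPartCoordSum
  have hg_pos : ∀ x ∈ (thickening ε (convexHull ℝ (range pts)))ᶜ, 0 < g x := fun x hx =>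
    (B.negPartCoordSum_nonneg x).lt_of_ne' fun h => hx <|
      convexHull_min hBε ((convex_convexHull ℝ _).thickening ε) (B.negPartCoordSum_eq_zero_iff.1 h)
  obtain ⟨δ, hδ, hδg⟩ := B.continuous_negPartCoordSum.exists_pos_le_of_isCompact_sublevel
    (B.isCompact_negPartCoordSum_le 1) isOpen_thickening.isClosed_compl hg_pos
  choose w b hwb using fun i => (-B.coord i).exists_inner_add_eq
  have hc : 0 < 2 / δ := by positivity
  refine ⟨fun x => 1 - 2 / δ * g x, 1, fun _ => -(2 / δ), w, b, fun x => ?_, fun x hx => ?_,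
    fun x _ => ?_, fun x hx => ?_⟩
  · simp only [g, AffineBasis.negPartCoordSum, ← hwb, Finset.mul_sum, negPart_def]
    simp [sub_eq_add_neg]
  · simp [g, B.negPartCoordSum_eq_zero_iff.2 (convexHull_mono hpB hx)]
  · simp only [sub_le_self_iff]
    exact mul_nonneg hc.le (B.negPartCoordSum_nonneg x)
  · have h2 : 2 / δ * δ ≤ 2 / δ * g x := by gcongr; exact hδg x hx
    rw [div_mul_cancel₀ _ hδ.ne'] at h2
    linarith

/-- For an `m`-simplex `Δ^m` in `ℝ^d` (`m ≤ d`) and `ε > 0`, there is a two-layer ReLU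
network with `d+1` hidden neurons equal to `1` on the simplex, `≤ 1` on its
`ε`-neighborhood, and `< 0` outside the `ε`-neighborhood. -/
theorem two_layer_network_for_simplex
    (d m : ℕ) (hm : m ≤ d)
    (pts : Fin (m + 1) → EuclideanSpace ℝ (Fin d))
    (hpts : AffineIndependent ℝ pts)
    (ε : ℝ) (hε : 0 < ε) :
    ∃ (T : EuclideanSpace ℝ (Fin d) → ℝ) (v₀ : ℝ) (v : Fin (d + 1) → ℝ)
      (w : Fin (d + 1) → EuclideanSpace ℝ (Fin d)) (b : Fin (d + 1) → ℝ),
      (∀ x, T x = v₀ + ∑ i, v i * max ((inner ℝ (w i) x : ℝ) + b i) 0) ∧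
      (∀ x ∈ convexHull ℝ (Set.range pts), T x = 1) ∧
      (∀ x ∈ Metric.thickening ε (convexHull ℝ (Set.range pts)), T x ≤ 1) ∧
      (∀ x ∉ Metric.thickening ε (convexHull ℝ (Set.range pts)), T x < 0) :=
  two_layer_network_for_simplex_general d m pts hpts ε hε
end

section
/- Consider the continuous gradient flow on the parameters of a two-layer ReLU network N(x) = v₀ + Σₖ vₖ·σ(wₖᵀx + bₖ) minimizing L(θ) = (1/n) Σᵢ ℓ(N(xᵢ), yᵢ) for a differentiable loss ℓ. Then for every hidden neuron k, the quantity vₖ² − ‖wₖ‖² − bₖ² is invariant along the flow (on intervals where the relevant activations are constant so that the flow is well defined). -/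
/-!
The ReLU is positively homogeneous: `σ(z) = σ'(z) z`. Hence, writing `zᵢ = ⟪w, xᵢ⟫ + b`,
both `v v'` and `⟪w, w'⟫ + b b'` equal `-(1/n) Σᵢ gᵢ v σ'(zᵢ) zᵢ`, so the time derivative of
`v² − ‖w‖² − b²` vanishes identically.
-/

open Finset

theorem max_zero_eq_ite_mul (z : ℝ) : max z 0 = (if 0 < z then 1 else 0) * z := by
  split_ifs with hz
  · rw [max_eq_left hz.le, one_mul]
  · rw [max_eq_right (not_lt.mp hz), zero_mul]

section

variable {E ι : Type*} [NormedAddCommGroup E] [InnerProductSpace ℝ E] [Fintype ι]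

theorem mul_sum_mul_relu_eq_inner_add_mul (x : ι → E) (g : ι → ℝ) (w : E) (v b : ℝ) :
    v * ∑ i, g i * max (inner ℝ w (x i) + b) 0
      = inner ℝ w (∑ i, (g i * v * (if 0 < inner ℝ w (x i) + b then (1 : ℝ) else 0)) • x i)
        + b * ∑ i, g i * v * (if 0 < inner ℝ w (x i) + b then (1 : ℝ) else 0) := by
  simp only [inner_sum, real_inner_smul_right, mul_sum, ← sum_add_distrib, max_zero_eq_ite_mul]
  exact sum_congr rfl fun i _ => by ring

theorem hasDerivAt_sq_sub_norm_sq_sub_sq {v b : ℝ → ℝ} {w : ℝ → E} {v' b' t : ℝ} {w' : E}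
    (hv : HasDerivAt v v' t) (hw : HasDerivAt w w' t) (hb : HasDerivAt b b' t) :
    HasDerivAt (fun s => v s ^ 2 - ‖w s‖ ^ 2 - b s ^ 2)
      (2 * (v t * v' - inner ℝ (w t) w' - b t * b')) t := by
  refine (((hv.pow 2).sub hw.norm_sq).sub (hb.pow 2)).congr_deriv ?_
  ring

end

theorem gradient_flow_balancedness_invariant_general
    (d m n : ℕ)
    (x : Fin n → EuclideanSpace ℝ (Fin d))
    (g : ℝ → Fin n → ℝ)
    (v : ℝ → Fin m → ℝ)
    (w : ℝ → Fin m → EuclideanSpace ℝ (Fin d))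
    (b : ℝ → Fin m → ℝ)
    (hv : ∀ k t, HasDerivAt (fun s => v s k)
      (-((1 / (n : ℝ)) * ∑ i, g t i * max ((inner ℝ (w t k) (x i) : ℝ) + b t k) 0)) t)
    (hw : ∀ k t, HasDerivAt (fun s => w s k)
      (-((1 / (n : ℝ)) • ∑ i, (g t i * v t k *
        (if 0 < (inner ℝ (w t k) (x i) : ℝ) + b t k then (1 : ℝ) else 0)) • x i)) t)
    (hb : ∀ k t, HasDerivAt (fun s => b s k)
      (-((1 / (n : ℝ)) * ∑ i, g t i * v t k *
        (if 0 < (inner ℝ (w t k) (x i) : ℝ) + b t k then (1 : ℝ) else 0))) t) :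
    ∀ (k : Fin m) (t : ℝ),
      (v t k) ^ 2 - ‖w t k‖ ^ 2 - (b t k) ^ 2
        = (v 0 k) ^ 2 - ‖w 0 k‖ ^ 2 - (b 0 k) ^ 2 := by
  intro k t
  have hderiv : ∀ s, HasDerivAt (fun u => v u k ^ 2 - ‖w u k‖ ^ 2 - b u k ^ 2) 0 s := by
    intro s
    refine (hasDerivAt_sq_sub_norm_sq_sub_sq (hv k s) (hw k s) (hb k s)).congr_deriv ?_
    simp only [inner_neg_right, real_inner_smul_right]
    linear_combination (-2 / (n : ℝ)) *
      mul_sum_mul_relu_eq_inner_add_mul x (g s) (w s k) (v s k) (b s k)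
  exact is_const_of_deriv_eq_zero (fun s => (hderiv s).differentiableAt)
    (fun s => (hderiv s).deriv) t 0

/-- Along the gradient flow of a two-layer ReLU network (with the stated gradient
formulas, `g t i` denoting `ℓ'(N(xᵢ), yᵢ)` at time `t`), the balancedness quantity
`vₖ² − ‖wₖ‖² − bₖ²` of every hidden neuron is conserved. -/
theorem gradient_flow_balancedness_invariant
    (d m n : ℕ) (hn : 0 < n)
    (x : Fin n → EuclideanSpace ℝ (Fin d))
    (g : ℝ → Fin n → ℝ)
    (v : ℝ → Fin m → ℝ)
    (w : ℝ → Fin m → EuclideanSpace ℝ (Fin d))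
    (b : ℝ → Fin m → ℝ)
    (hv : ∀ k t, HasDerivAt (fun s => v s k)
      (-((1 / (n : ℝ)) * ∑ i, g t i * max ((inner ℝ (w t k) (x i) : ℝ) + b t k) 0)) t)
    (hw : ∀ k t, HasDerivAt (fun s => w s k)
      (-((1 / (n : ℝ)) • ∑ i, (g t i * v t k *
        (if 0 < (inner ℝ (w t k) (x i) : ℝ) + b t k then (1 : ℝ) else 0)) • x i)) t)
    (hb : ∀ k t, HasDerivAt (fun s => b s k)
      (-((1 / (n : ℝ)) * ∑ i, g t i * v t k *
        (if 0 < (inner ℝ (w t k) (x i) : ℝ) + b t k then (1 : ℝ) else 0))) t) :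
    ∀ (k : Fin m) (t : ℝ),
      (v t k) ^ 2 - ‖w t k‖ ^ 2 - (b t k) ^ 2
        = (v 0 k) ^ 2 - ‖w 0 k‖ ^ 2 - (b 0 k) ^ 2 :=
  gradient_flow_balancedness_invariant_general d m n x g v w b hv hw hb
end

section
/- Let Tⱼ(x) = λ + Σₖ vⱼₖ·ReLU(wⱼₖᵀx + bⱼₖ) for j = 1,…,J with λ > 0 and all vⱼₖ < 0, and let N(x) = −λ/2 + Σⱼ aⱼ·ReLU(Tⱼ(x)) with aⱼ ∈ {+1, −1}. Suppose for a finite dataset D = {(xᵢ, yᵢ)} each ReLU(Tⱼ(xᵢ)) equals 0 or λ. Define Cⱼ = {x : Tⱼ(x) = λ}. Then for every data point xᵢ, N(xᵢ) > 0 if and only if Σ_{j: aⱼ=+1} 𝟙[xᵢ ∈ Cⱼ] > Σ_{j: aⱼ=−1} 𝟙[xᵢ ∈ Cⱼ]; hence {Cⱼ} forms a polytope-basis cover of D with the same classification accuracy as N. -/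
/-!
On the dataset each `ReLU(Tⱼ(xᵢ))` is either `0` or `λ`, and it is `λ` exactly when
`Tⱼ(xᵢ) = λ`. Hence `N(xᵢ) = λ (P - Q) - λ/2`, where `P` and `Q` count the polytopes
containing `xᵢ` with weight `+1` and `-1`; since `P - Q` is an integer, this is positive
exactly when `Q < P`.
-/

lemma max_zero_eq_ite_of_binary {t c : ℝ} (hc : 0 < c) (h : max t 0 = 0 ∨ max t 0 = c) :
    max t 0 = if t = c then c else 0 := by
  split_ifs with htc
  · rw [htc, max_eq_left hc.le]
  · rcases h with h | h
    · exact h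
    · rcases le_or_gt t 0 with ht | ht
      · rw [max_eq_right ht] at h
        exact absurd h.symm hc.ne'
      · exact absurd ((max_eq_left ht.le).symm.trans h) htc

lemma sum_sign_mul_ite_eq_mul_ncard_sub {ι : Type*} [Fintype ι] {a : ι → ℝ}
    (ha : ∀ j, a j = 1 ∨ a j = -1) (p : ι → Prop) [DecidablePred p] (c : ℝ) :
    ∑ j, a j * (if p j then c else 0) =
      c * ({j | a j = 1 ∧ p j}.ncard - {j | a j = -1 ∧ p j}.ncard) := by
  classical
  have hsplit : ∀ j, a j * (if p j then c else 0) =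
      (if a j = 1 ∧ p j then c else 0) - (if a j = -1 ∧ p j then c else 0) := by
    intro j
    rcases ha j with h | h <;> by_cases hp : p j <;> norm_num [h, hp]
  simp only [hsplit, Finset.sum_sub_distrib, Finset.sum_ite, Finset.sum_const_zero, add_zero,
    Finset.sum_const, nsmul_eq_mul, Set.ncard_eq_toFinset_card', Set.toFinset_ofPred]
  ring

lemma half_lt_natCast_sub_natCast_iff {p q : ℕ} : (1 / 2 : ℝ) < p - q ↔ q < p := by
  constructor
  · intro h
    by_contra! hpq
    have : (p : ℝ) ≤ q := by exact_mod_cast hpq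
    linarith
  · intro h
    have : (q : ℝ) + 1 ≤ p := by exact_mod_cast h
    linarith

theorem three_layer_network_gives_polytope_basis_cover_general
    (d J n : ℕ) (lam : ℝ) (hlam : 0 < lam)
    (a : Fin J → ℝ) (ha : ∀ j, a j = 1 ∨ a j = -1)
    (T : Fin J → EuclideanSpace ℝ (Fin d) → ℝ)
    (N : EuclideanSpace ℝ (Fin d) → ℝ)
    (hN : ∀ x, N x = -(lam / 2) + ∑ j, a j * max (T j x) 0)
    (xs : Fin n → EuclideanSpace ℝ (Fin d))
    (hbinary : ∀ (i : Fin n) (j : Fin J),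
      max (T j (xs i)) 0 = 0 ∨ max (T j (xs i)) 0 = lam) :
    ∀ i : Fin n,
      0 < N (xs i) ↔
        {j : Fin J | a j = -1 ∧ T j (xs i) = lam}.ncard
          < {j : Fin J | a j = 1 ∧ T j (xs i) = lam}.ncard := by
  intro i
  classical
  have hrelu : ∀ j, max (T j (xs i)) 0 = if T j (xs i) = lam then lam else 0 :=
    fun j => max_zero_eq_ite_of_binary hlam (hbinary i j)
  rw [hN, Finset.sum_congr rfl fun j _ => by rw [hrelu j],
    sum_sign_mul_ite_eq_mul_ncard_sub ha, ← half_lt_natCast_sub_natCast_iff]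
  constructor <;> intro h <;> nlinarith

/-- If each subnetwork output `ReLU(Tⱼ(xᵢ))` is `0` or `λ` on the dataset, then
`N(xᵢ) > 0` iff the number of polytopes `Cⱼ = {x | Tⱼ x = λ}` with `aⱼ = +1`
containing `xᵢ` exceeds the number with `aⱼ = −1` containing `xᵢ`; hence `{Cⱼ}` is a
polytope-basis cover of the dataset with the same accuracy as `N`. -/
theorem three_layer_network_gives_polytope_basis_cover
    (d J n : ℕ) (lam : ℝ) (hlam : 0 < lam)
    (mJ : Fin J → ℕ)
    (v : (j : Fin J) → Fin (mJ j) → ℝ) (hv : ∀ j k, v j k < 0)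
    (w : (j : Fin J) → Fin (mJ j) → EuclideanSpace ℝ (Fin d))
    (b : (j : Fin J) → Fin (mJ j) → ℝ)
    (a : Fin J → ℝ) (ha : ∀ j, a j = 1 ∨ a j = -1)
    (T : Fin J → EuclideanSpace ℝ (Fin d) → ℝ)
    (hT : ∀ j x, T j x = lam + ∑ k, v j k * max ((inner ℝ (w j k) x : ℝ) + b j k) 0)
    (N : EuclideanSpace ℝ (Fin d) → ℝ)
    (hN : ∀ x, N x = -(lam / 2) + ∑ j, a j * max (T j x) 0)
    (xs : Fin n → EuclideanSpace ℝ (Fin d))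
    (hbinary : ∀ (i : Fin n) (j : Fin J),
      max (T j (xs i)) 0 = 0 ∨ max (T j (xs i)) 0 = lam) :
    ∀ i : Fin n,
      0 < N (xs i) ↔
        {j : Fin J | a j = -1 ∧ T j (xs i) = lam}.ncard
          < {j : Fin J | a j = 1 ∧ T j (xs i) = lam}.ncard :=
  three_layer_network_gives_polytope_basis_cover_general d J n lam hlam a ha T N hN xs hbinary
end

section
/- Let f: ℝ^{dx} → [0,1] be an L-Lipschitz function supported in [0,1]^{dx}, let p ≥ 1, and ε > 0. Then there exists a three-layer ReLU network N with first hidden width 2·n·dx and second hidden width n, where n = O(ε^{−dx}), such that ‖N − f‖_{L^p(ℝ^{dx})} < ε. -/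
open Set MeasureTheory

/-!
Split `[0,1]^d` into the `m^d` grid cells of side `1/m`. For one cell, `2d` first-layer ReLUs
measure how far `x` lies beyond each face of the cell shrunk by `t`, and one second-layer ReLU of
`1 - t⁻¹ · (their sum)` is a bump that is `1` on the shrunk cell and `0` outside the open cell.
Weighting each bump by the value of `f` at the centre of its cell gives a network `N` with values
in `[0,1]`, vanishing outside the cube, and with `|N - f| ≤ L √d / (2m)` away from the
`t`-neighbourhood of the grid hyperplanes, which meets the cube in measure at most `2t·d(m+1)`.
So `‖N - f‖_p^p ≤ (L √d / (2m))^p + 2t·d(m+1)`, which is `< ε^p` for `m = ⌊√d L / (2ε)⌋ + 1`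
and `t` small enough.
-/

theorem EuclideanSpace.dist_le_sqrt_card_mul {ι : Type*} [Fintype ι] {x y : EuclideanSpace ℝ ι}
    {r : ℝ} (hr : 0 ≤ r) (h : ∀ i, |x i - y i| ≤ r) : dist x y ≤ √(Fintype.card ι) * r := by
  rw [EuclideanSpace.dist_eq, ← Real.sqrt_sq hr, ← Real.sqrt_mul (Nat.cast_nonneg _)]
  refine Real.sqrt_le_sqrt ?_
  calc ∑ i, dist (x i) (y i) ^ 2 ≤ ∑ _i : ι, r ^ 2 :=
        Finset.sum_le_sum fun i _ => pow_le_pow_left₀ dist_nonneg (h i) 2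
    _ = Fintype.card ι * r ^ 2 := by simp

theorem EuclideanSpace.volume_setOf_forall_mem {ι : Type*} [Fintype ι] (s : ι → Set ℝ) :
    volume {x : EuclideanSpace ℝ ι | ∀ i, x i ∈ s i} = ∏ i, volume (s i) := by
  have : {x : EuclideanSpace ℝ ι | ∀ i, x i ∈ s i} =
      (MeasurableEquiv.toLp 2 (ι → ℝ)).symm ⁻¹' univ.pi s := by
    ext x; simp
  rw [this, (EuclideanSpace.volume_preserving_symm_measurableEquiv_toLp ι).measure_preimage_equiv,
    volume_pi_pi]

theorem eLpNorm_lt_ofReal_of_lintegral_lt {α E : Type*} [MeasurableSpace α] {μ : Measure α}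
    [NormedAddCommGroup E] {g : α → E} {p ε : ℝ} (hp : 0 < p) (hε : 0 < ε)
    (h : ∫⁻ x, ‖g x‖ₑ ^ p ∂μ < ENNReal.ofReal (ε ^ p)) :
    eLpNorm g (ENNReal.ofReal p) μ < ENNReal.ofReal ε := by
  rw [eLpNorm_eq_lintegral_rpow_enorm_toReal (by simpa using hp) ENNReal.ofReal_ne_top,
    ENNReal.toReal_ofReal hp.le, one_div, ENNReal.rpow_inv_lt_iff hp,
    ENNReal.ofReal_rpow_of_pos hε]
  exact h

noncomputable section

namespace ReLUNetwork

section Network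

variable {E : Type*} [NormedAddCommGroup E] [InnerProductSpace ℝ E]

def threeLayerReLU {n H : ℕ} (W₁ : Fin H → E) (b₁ : Fin H → ℝ) (W₂ : Fin n → Fin H → ℝ)
    (b₂ : Fin n → ℝ) (a : Fin n → ℝ) (c : ℝ) (x : E) : ℝ :=
  c + ∑ j, a j * max (b₂ j + ∑ k, W₂ j k * max (inner ℝ (W₁ k) x + b₁ k) 0) 0

theorem exists_threeLayerReLU_eq_sum_blocks {ι κ : Type*} [Fintype ι] [Fintype κ]
    {n H : ℕ} (eι : ι ≃ Fin n) (e : ι × κ ≃ Fin H) (a b : ι → ℝ) (v β : ι → κ → ℝ)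
    (w : ι → κ → E) (c : ℝ) :
    ∃ (W₁ : Fin H → E) (b₁ : Fin H → ℝ) (W₂ : Fin n → Fin H → ℝ) (b₂ : Fin n → ℝ)
      (a' : Fin n → ℝ), ∀ x, threeLayerReLU W₁ b₁ W₂ b₂ a' c x =
        c + ∑ j, a j * max (b j + ∑ k, v j k * max (inner ℝ (w j k) x + β j k) 0) 0 := by
  classical
  -- block-diagonal second layer: unit `j` reads only the hidden neurons `e (j, _)`
  refine ⟨fun k => w (e.symm k).1 (e.symm k).2, fun k => β (e.symm k).1 (e.symm k).2,
    fun j k => if (e.symm k).1 = eι.symm j then v (e.symm k).1 (e.symm k).2 else 0,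
    fun j => b (eι.symm j), fun j => a (eι.symm j), fun x => ?_⟩
  rw [threeLayerReLU, ← eι.symm.sum_comp]
  refine congrArg (c + ·) (Finset.sum_congr rfl fun j _ => ?_)
  rw [← e.sum_comp]
  simp [Fintype.sum_prod_type, ite_mul]

end Network

variable {d : ℕ}

def boxBump (t : ℝ) (l u : Fin d → ℝ) (x : EuclideanSpace ℝ (Fin d)) : ℝ :=
  max (1 - t⁻¹ * ∑ i, (max (x i - (u i - t)) 0 + max (l i + t - x i) 0)) 0

theorem boxBump_nonneg (t : ℝ) (l u : Fin d → ℝ) (x : EuclideanSpace ℝ (Fin d)) :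
    0 ≤ boxBump t l u x :=
  le_max_right _ _

theorem boxBump_le_one {t : ℝ} (ht : 0 ≤ t) (l u : Fin d → ℝ) (x : EuclideanSpace ℝ (Fin d)) :
    boxBump t l u x ≤ 1 := by
  have : 0 ≤ t⁻¹ * ∑ i, (max (x i - (u i - t)) 0 + max (l i + t - x i) 0) := by positivity
  exact max_le (by linarith) zero_le_one

theorem boxBump_eq_one {t : ℝ} {l u : Fin d → ℝ} {x : EuclideanSpace ℝ (Fin d)}
    (h : ∀ i, x i ∈ Icc (l i + t) (u i - t)) : boxBump t l u x = 1 := by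
  have : ∀ i, max (x i - (u i - t)) 0 + max (l i + t - x i) 0 = 0 := fun i => by
    rw [max_eq_right (by linarith [(h i).2]), max_eq_right (by linarith [(h i).1]), add_zero]
  simp [boxBump, this]

theorem mem_Ioo_of_boxBump_ne_zero {t : ℝ} (ht : 0 < t) {l u : Fin d → ℝ}
    {x : EuclideanSpace ℝ (Fin d)} (h : boxBump t l u x ≠ 0) (i : Fin d) :
    x i ∈ Ioo (l i) (u i) := by
  by_contra hi
  have hterm : t ≤ max (x i - (u i - t)) 0 + max (l i + t - x i) 0 := by
    rw [mem_Ioo, not_and_or, not_lt, not_lt] at hi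
    rcases hi with hi | hi
    · linarith [le_max_left (l i + t - x i) 0, le_max_right (x i - (u i - t)) 0]
    · linarith [le_max_left (x i - (u i - t)) 0, le_max_right (l i + t - x i) 0]
  have hsum := hterm.trans (Finset.single_le_sum (f := fun j =>
    max (x j - (u j - t)) 0 + max (l j + t - x j) 0) (fun j _ => by positivity) (Finset.mem_univ i))
  refine h (max_eq_right ?_)
  rw [sub_nonpos, inv_mul_eq_div, le_div_iff₀ ht, one_mul]
  exact hsum

theorem boxBump_eq_relu_sum (t : ℝ) (l u : Fin d → ℝ) (x : EuclideanSpace ℝ (Fin d)) :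
    boxBump t l u x = max (1 + ∑ q : Fin d × Bool, -t⁻¹ *
      max (inner ℝ (EuclideanSpace.single q.1 (if q.2 then 1 else -1)) x +
        (if q.2 then t - u q.1 else l q.1 + t)) 0) 0 := by
  simp only [boxBump, Fintype.sum_prod_type, Fintype.sum_bool, EuclideanSpace.inner_single_left,
    if_true, Bool.false_eq_true, if_false, map_one, map_neg, one_mul, neg_one_mul]
  rw [sub_eq_add_neg, neg_mul_eq_neg_mul, Finset.mul_sum]
  congr 3 with i
  ring_nf

def cellBump (m : ℕ) (t : ℝ) (v : Fin d → Fin m) : EuclideanSpace ℝ (Fin d) → ℝ :=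
  boxBump t (fun i => (v i : ℝ) / m) (fun i => ((v i : ℝ) + 1) / m)

def cellCenter (m : ℕ) (v : Fin d → Fin m) : EuclideanSpace ℝ (Fin d) :=
  WithLp.toLp 2 fun i => ((v i : ℝ) + 1 / 2) / m

def gridNet (m : ℕ) (t : ℝ) (f : EuclideanSpace ℝ (Fin d) → ℝ)
    (x : EuclideanSpace ℝ (Fin d)) : ℝ :=
  ∑ v : Fin d → Fin m, f (cellCenter m v) * cellBump m t v x

theorem exists_threeLayerReLU_eq_gridNet (m : ℕ) (t : ℝ) (f : EuclideanSpace ℝ (Fin d) → ℝ) :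
    ∃ (W₁ : Fin (2 * m ^ d * d) → EuclideanSpace ℝ (Fin d)) (b₁ : Fin (2 * m ^ d * d) → ℝ)
      (W₂ : Fin (m ^ d) → Fin (2 * m ^ d * d) → ℝ) (b₂ : Fin (m ^ d) → ℝ) (a : Fin (m ^ d) → ℝ),
      ∀ x, threeLayerReLU W₁ b₁ W₂ b₂ a 0 x = gridNet m t f x := by
  have e : (Fin d → Fin m) × (Fin d × Bool) ≃ Fin (2 * m ^ d * d) :=
    Fintype.equivFinOfCardEq (by simp only [Fintype.card_prod, Fintype.card_fun,
      Fintype.card_fin, Fintype.card_bool]; ring)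
  obtain ⟨W₁, b₁, W₂, b₂, a, h⟩ := exists_threeLayerReLU_eq_sum_blocks finFunctionFinEquiv e
    (fun v => f (cellCenter m v)) (fun _ => 1) (fun _ _ => -t⁻¹)
    (fun v q => if q.2 then t - ((v q.1 : ℝ) + 1) / m else (v q.1 : ℝ) / m + t)
    (fun _ q => EuclideanSpace.single q.1 (if q.2 then (1 : ℝ) else -1)) 0
  refine ⟨W₁, b₁, W₂, b₂, a, fun x => ?_⟩
  rw [h, zero_add, gridNet]
  exact Finset.sum_congr rfl fun v _ => by rw [cellBump, boxBump_eq_relu_sum]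

def unitCube (d : ℕ) : Set (EuclideanSpace ℝ (Fin d)) := {x | ∀ i, x i ∈ Icc 0 1}

def gridSlabs (m : ℕ) (t : ℝ) : Set (EuclideanSpace ℝ (Fin d)) :=
  {x | ∃ i, ∃ k ≤ m, |x i - k / m| ≤ t}

theorem eq_of_mem_Ioo_div {m k k' : ℕ} {y : ℝ} (hk : y ∈ Ioo ((k : ℝ) / m) ((k + 1) / m))
    (hk' : y ∈ Ioo ((k' : ℝ) / m) ((k' + 1) / m)) : k = k' := by
  rcases Nat.eq_zero_or_pos m with rfl | hm
  · simp at hk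
  have hm' : (0 : ℝ) < m := by exact_mod_cast hm
  simp only [mem_Ioo, div_lt_iff₀ hm', lt_div_iff₀ hm'] at hk hk'
  have h₁ : (k : ℝ) < k' + 1 := by linarith
  have h₂ : (k' : ℝ) < k + 1 := by linarith
  norm_cast at h₁ h₂
  omega

theorem exists_mem_Icc_of_forall_lt_abs_sub {m : ℕ} (hm : 0 < m) {t y : ℝ} (ht : 0 ≤ t)
    (hy : y ∈ Icc 0 1) (h : ∀ k ≤ m, t < |y - k / m|) :
    ∃ k : Fin m, y ∈ Icc ((k : ℝ) / m + t) ((k + 1) / m - t) := by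
  have hm' : (0 : ℝ) < m := by exact_mod_cast hm
  have hy1 : y < 1 := by
    have := h m le_rfl
    rw [div_self hm'.ne'] at this
    exact lt_of_le_of_ne hy.2 fun hy1 => by simp [hy1] at this; linarith
  set k := ⌊y * m⌋₊
  have hk : (k : ℝ) / m ≤ y := by
    rw [div_le_iff₀ hm']; exact Nat.floor_le (by nlinarith [hy.1])
  have hk1 : y < (k + 1) / m := by
    rw [lt_div_iff₀ hm']; exact Nat.lt_floor_add_one _
  have hkm : k < m := by
    apply Nat.floor_lt (by nlinarith [hy.1]) |>.2; nlinarith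
  have h₁ := h k hkm.le
  have h₂ := h (k + 1) hkm
  rw [abs_of_nonneg (by linarith)] at h₁
  rw [Nat.cast_succ, abs_of_neg (by linarith)] at h₂
  exact ⟨⟨k, hkm⟩, by constructor <;> linarith⟩

theorem eq_of_cellBump_ne_zero {m : ℕ} {t : ℝ} (ht : 0 < t) {v w : Fin d → Fin m}
    {x : EuclideanSpace ℝ (Fin d)} (hv : cellBump m t v x ≠ 0) (hw : cellBump m t w x ≠ 0) :
    v = w :=
  funext fun i => Fin.ext <|
    eq_of_mem_Ioo_div (mem_Ioo_of_boxBump_ne_zero ht hv i) (mem_Ioo_of_boxBump_ne_zero ht hw i)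

theorem mem_unitCube_of_cellBump_ne_zero {m : ℕ} {t : ℝ} (ht : 0 < t) {v : Fin d → Fin m}
    {x : EuclideanSpace ℝ (Fin d)} (hv : cellBump m t v x ≠ 0) : x ∈ unitCube d := by
  intro i
  obtain ⟨h₀, h₁⟩ := mem_Ioo_of_boxBump_ne_zero ht hv i
  have : ((v i : ℝ) + 1) / m ≤ 1 := div_le_one_of_le₀ (by exact_mod_cast (v i).isLt) (by positivity)
  exact ⟨(by positivity : (0 : ℝ) ≤ (v i : ℝ) / m).trans h₀.le, h₁.le.trans this⟩

theorem gridNet_eq_of_cellBump_ne_zero {m : ℕ} {t : ℝ} (ht : 0 < t)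
    (f : EuclideanSpace ℝ (Fin d) → ℝ) {v : Fin d → Fin m} {x : EuclideanSpace ℝ (Fin d)}
    (hv : cellBump m t v x ≠ 0) : gridNet m t f x = f (cellCenter m v) * cellBump m t v x :=
  Finset.sum_eq_single v (fun w _ hw => by
    rw [not_not.1 fun h => hw (eq_of_cellBump_ne_zero ht h hv), mul_zero]) (by simp)

theorem gridNet_eq_zero_of_notMem_unitCube {m : ℕ} {t : ℝ} (ht : 0 < t)
    (f : EuclideanSpace ℝ (Fin d) → ℝ) {x : EuclideanSpace ℝ (Fin d)} (hx : x ∉ unitCube d) :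
    gridNet m t f x = 0 :=
  Finset.sum_eq_zero fun v _ => by
    rw [not_not.1 fun h => hx (mem_unitCube_of_cellBump_ne_zero ht h), mul_zero]

theorem gridNet_mem_Icc {m : ℕ} {t : ℝ} (ht : 0 < t) {f : EuclideanSpace ℝ (Fin d) → ℝ}
    (hf : ∀ x, f x ∈ Icc 0 1) (x : EuclideanSpace ℝ (Fin d)) : gridNet m t f x ∈ Icc 0 1 := by
  by_cases h : ∃ v, cellBump m t v x ≠ 0
  · obtain ⟨v, hv⟩ := h
    rw [gridNet_eq_of_cellBump_ne_zero ht f hv]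
    exact unitInterval.mul_mem (hf _) ⟨boxBump_nonneg _ _ _ _, boxBump_le_one ht.le _ _ _⟩
  · push Not at h
    simp [gridNet, h]

theorem abs_cellCenter_sub_le {m : ℕ} {v : Fin d → Fin m} {x : EuclideanSpace ℝ (Fin d)} {i : Fin d}
    (h : x i ∈ Icc ((v i : ℝ) / m) ((v i + 1) / m)) : |cellCenter m v i - x i| ≤ 1 / (2 * m) := by
  have hc : cellCenter m v i = (v i : ℝ) / m + 1 / (2 * m) := by
    simp only [cellCenter, PiLp.toLp_apply]; ring
  have hu : ((v i : ℝ) + 1) / m = (v i : ℝ) / m + 2 * (1 / (2 * m)) := by ring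
  rw [hc, abs_le]
  constructor <;> linarith [h.1, h.2]

theorem abs_gridNet_sub_le {m : ℕ} (hm : 0 < m) {t L : ℝ} (ht : 0 < t) (hL : 0 ≤ L)
    {f : EuclideanSpace ℝ (Fin d) → ℝ} (hf : LipschitzWith (Real.toNNReal L) f)
    {x : EuclideanSpace ℝ (Fin d)} (hx : x ∈ unitCube d)
    (hgood : x ∉ gridSlabs m t) : |gridNet m t f x - f x| ≤ L * (√d / (2 * m)) := by
  have hfar : ∀ i, ∀ k ≤ m, t < |x i - k / m| := by simpa [gridSlabs] using hgood
  choose v hv using fun i => exists_mem_Icc_of_forall_lt_abs_sub hm ht.le (hx i) (hfar i)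
  have hbump : cellBump m t v x = 1 := boxBump_eq_one hv
  have hcell : ∀ i, x i ∈ Icc ((v i : ℝ) / m) ((v i + 1) / m) := fun i =>
    ⟨by linarith [(hv i).1], by linarith [(hv i).2]⟩
  rw [gridNet_eq_of_cellBump_ne_zero ht f (by rw [hbump]; exact one_ne_zero), hbump, mul_one,
    ← Real.dist_eq]
  calc dist (f (cellCenter m v)) (f x) ≤ L * dist (cellCenter m v) x := by
        simpa [Real.coe_toNNReal _ hL] using hf.dist_le_mul (cellCenter m v) x
    _ ≤ L * (√d * (1 / (2 * m))) := by
        gcongr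
        simpa using EuclideanSpace.dist_le_sqrt_card_mul (by positivity)
          fun i => abs_cellCenter_sub_le (hcell i)
    _ = L * (√d / (2 * m)) := by ring

theorem volume_unitCube : volume (unitCube d) = 1 := by
  rw [unitCube, EuclideanSpace.volume_setOf_forall_mem]
  simp [Real.volume_Icc]

theorem measurableSet_unitCube : MeasurableSet (unitCube d) := by
  unfold unitCube
  measurability

theorem measurableSet_gridSlabs (m : ℕ) (t : ℝ) : MeasurableSet (gridSlabs (d := d) m t) := by
  unfold gridSlabs
  measurability

theorem volume_unitCube_inter_slab_le (i : Fin d) (c t : ℝ) :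
    volume (unitCube d ∩ {x | |x i - c| ≤ t}) ≤ ENNReal.ofReal (2 * t) := by
  classical
  calc volume (unitCube d ∩ {x | |x i - c| ≤ t})
      ≤ volume {x : EuclideanSpace ℝ (Fin d) | ∀ j,
          x j ∈ Function.update (fun _ => Icc 0 1) i (Icc (c - t) (c + t)) j} := by
        refine measure_mono fun x ⟨hx, hxi⟩ j => ?_
        rcases eq_or_ne j i with rfl | hj
        · simpa [abs_le, sub_le_iff_le_add, add_comm] using hxi
        · simpa [hj] using hx j
    _ = ENNReal.ofReal (2 * t) := by
        rw [EuclideanSpace.volume_setOf_forall_mem,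
          Finset.prod_eq_single i (fun j _ hj => by simp [hj, Real.volume_Icc]) (by simp)]
        simp only [Function.update_self, Real.volume_Icc]
        ring_nf

theorem volume_unitCube_inter_gridSlabs_le (m : ℕ) (t : ℝ) :
    volume (unitCube d ∩ gridSlabs m t) ≤ ENNReal.ofReal (d * (m + 1) * (2 * t)) := by
  have hsub : unitCube d ∩ gridSlabs m t ⊆
      ⋃ i, ⋃ k ∈ Finset.range (m + 1), unitCube d ∩ {x | |x i - k / m| ≤ t} := by
    rintro x ⟨hx, i, k, hk, hxk⟩
    simp only [mem_iUnion]
    exact ⟨i, k, Finset.mem_range_succ_iff.2 hk, hx, hxk⟩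
  calc volume (unitCube d ∩ gridSlabs m t)
      ≤ ∑ i : Fin d, ∑ k ∈ Finset.range (m + 1), volume (unitCube d ∩ {x | |x i - k / m| ≤ t}) :=
        (measure_mono hsub).trans <| (measure_iUnion_fintype_le _ _).trans <|
          Finset.sum_le_sum fun i _ => measure_biUnion_finset_le _ _
    _ ≤ ∑ _i : Fin d, ∑ _k ∈ Finset.range (m + 1), ENNReal.ofReal (2 * t) :=
        Finset.sum_le_sum fun i _ => Finset.sum_le_sum fun k _ =>
          volume_unitCube_inter_slab_le i _ t
    _ = ENNReal.ofReal (d * (m + 1) * (2 * t)) := by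
        have : ENNReal.ofReal (d * (m + 1)) = ((d * (m + 1) : ℕ) : ENNReal) := by
          exact_mod_cast ENNReal.ofReal_natCast (d * (m + 1))
        rw [ENNReal.ofReal_mul (p := d * (m + 1)) (by positivity), this]
        simp [mul_assoc]

theorem enorm_gridNet_sub_rpow_le_indicator {m : ℕ} (hm : 0 < m) {t L p : ℝ} (ht : 0 < t)
    (hL : 0 ≤ L) (hp : 0 < p) {f : EuclideanSpace ℝ (Fin d) → ℝ}
    (hf : LipschitzWith (Real.toNNReal L) f) (hrange : ∀ x, f x ∈ Icc 0 1)
    (hsupp : Function.support f ⊆ unitCube d) (x : EuclideanSpace ℝ (Fin d)) :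
    ‖gridNet m t f x - f x‖ₑ ^ p ≤
      (unitCube d).indicator (fun _ => ENNReal.ofReal ((L * (√d / (2 * m))) ^ p)) x +
        (unitCube d ∩ gridSlabs m t).indicator 1 x := by
  by_cases hx : x ∈ unitCube d
  · by_cases hbad : x ∈ gridSlabs m t
    · have hxbad : x ∈ unitCube d ∩ gridSlabs m t := ⟨hx, hbad⟩
      rw [indicator_of_mem hxbad, Pi.one_apply]
      refine le_add_left (ENNReal.rpow_le_one ?_ hp.le)
      rw [Real.enorm_eq_ofReal_abs, ENNReal.ofReal_le_one, abs_sub_le_iff]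
      obtain ⟨hN₀, hN₁⟩ := gridNet_mem_Icc (m := m) ht hrange x
      obtain ⟨hf₀, hf₁⟩ := hrange x
      constructor <;> linarith
    · rw [indicator_of_mem hx]
      refine le_add_right ?_
      rw [Real.enorm_eq_ofReal_abs, ENNReal.ofReal_rpow_of_nonneg (abs_nonneg _) hp.le]
      exact ENNReal.ofReal_le_ofReal (Real.rpow_le_rpow (abs_nonneg _)
        (abs_gridNet_sub_le hm ht hL hf hx hbad) hp.le)
  · have hfx : f x = 0 := Function.notMem_support.1 fun h => hx (hsupp h)
    simp [gridNet_eq_zero_of_notMem_unitCube ht f hx, hfx, ENNReal.zero_rpow_of_pos hp]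

theorem lintegral_enorm_gridNet_sub_rpow_le {m : ℕ} (hm : 0 < m) {t L p : ℝ} (ht : 0 < t)
    (hL : 0 ≤ L) (hp : 0 < p) {f : EuclideanSpace ℝ (Fin d) → ℝ}
    (hf : LipschitzWith (Real.toNNReal L) f) (hrange : ∀ x, f x ∈ Icc 0 1)
    (hsupp : Function.support f ⊆ unitCube d) :
    ∫⁻ x, ‖gridNet m t f x - f x‖ₑ ^ p ≤
      ENNReal.ofReal ((L * (√d / (2 * m))) ^ p + d * (m + 1) * (2 * t)) := by
  calc ∫⁻ x, ‖gridNet m t f x - f x‖ₑ ^ p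
      ≤ ∫⁻ x, ((unitCube d).indicator (fun _ => ENNReal.ofReal ((L * (√d / (2 * m))) ^ p)) x +
          (unitCube d ∩ gridSlabs m t).indicator 1 x) :=
        lintegral_mono (enorm_gridNet_sub_rpow_le_indicator hm ht hL hp hf hrange hsupp)
    _ = ENNReal.ofReal ((L * (√d / (2 * m))) ^ p) + volume (unitCube d ∩ gridSlabs m t) := by
        rw [lintegral_add_left (measurable_const.indicator measurableSet_unitCube),
          lintegral_indicator_const measurableSet_unitCube, volume_unitCube, mul_one,
          lintegral_indicator_one (measurableSet_unitCube.inter (measurableSet_gridSlabs m t))]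
    _ ≤ ENNReal.ofReal ((L * (√d / (2 * m))) ^ p) + ENNReal.ofReal (d * (m + 1) * (2 * t)) :=
        add_le_add_right (volume_unitCube_inter_gridSlabs_le m t) _
    _ = _ := (ENNReal.ofReal_add (by positivity) (by positivity)).symm

end ReLUNetwork

end

theorem le_one_add_rpow_rpow_inv {A p : ℝ} (hA : 0 ≤ A) (hp : 0 < p) :
    A ≤ (1 + A ^ p) ^ p⁻¹ :=
  (Real.le_rpow_inv_iff_of_pos hA (by positivity) hp).2 (by linarith)

theorem div_two_mul_floor_add_one_lt (A : ℝ) {ε : ℝ} (hε : 0 < ε) :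
    A / (2 * ((⌊A / (2 * ε)⌋₊ + 1 : ℕ) : ℝ)) < ε := by
  have := Nat.lt_floor_add_one (A / (2 * ε))
  rw [div_lt_iff₀ (by positivity)] at this
  rw [div_lt_iff₀ (by positivity)]
  push_cast
  linarith

theorem floor_add_one_pow_le {A ε p : ℝ} (hA : 0 ≤ A) (hε : 0 < ε) (hp : 0 < p) (d : ℕ) :
    (((⌊A / (2 * ε)⌋₊ + 1) ^ d : ℕ) : ℝ) ≤
      ε ^ (-(d : ℝ)) * (1 + A ^ p) ^ ((d : ℝ) / p) + 1 := by
  have hX : ε ^ (-(d : ℝ)) * (1 + A ^ p) ^ ((d : ℝ) / p) = (ε⁻¹ * (1 + A ^ p) ^ p⁻¹) ^ d := by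
    rw [mul_pow, Real.rpow_neg hε.le, Real.rpow_natCast, inv_pow,
      ← Real.rpow_natCast ((1 + A ^ p) ^ p⁻¹), ← Real.rpow_mul (by positivity), inv_mul_eq_div p]
  rw [hX]
  rcases eq_or_ne ⌊A / (2 * ε)⌋₊ 0 with h0 | h0
  · simp only [h0, zero_add, one_pow, Nat.cast_one]
    linarith [pow_nonneg (by positivity : (0 : ℝ) ≤ ε⁻¹ * (1 + A ^ p) ^ p⁻¹) d]
  · have h1 : (1 : ℝ) ≤ ⌊A / (2 * ε)⌋₊ := by exact_mod_cast Nat.one_le_iff_ne_zero.2 h0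
    have hfl : (⌊A / (2 * ε)⌋₊ : ℝ) ≤ A / (2 * ε) := Nat.floor_le (by positivity)
    have hm : (⌊A / (2 * ε)⌋₊ + 1 : ℝ) ≤ ε⁻¹ * (1 + A ^ p) ^ p⁻¹ :=
      calc (⌊A / (2 * ε)⌋₊ + 1 : ℝ) ≤ 2 * (A / (2 * ε)) := by linarith
        _ = ε⁻¹ * A := by field_simp
        _ ≤ ε⁻¹ * (1 + A ^ p) ^ p⁻¹ := by gcongr; exact le_one_add_rpow_rpow_inv hA hp
    push_cast
    linarith [pow_le_pow_left₀ (by positivity) hm d]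

open ReLUNetwork

theorem three_layer_universal_approximation_general
    (dx : ℕ) (L p ε : ℝ) (hL : 0 ≤ L) (hp : 1 ≤ p) (hε : 0 < ε)
    (f : EuclideanSpace ℝ (Fin dx) → ℝ)
    (hf : LipschitzWith (Real.toNNReal L) f)
    (hrange : ∀ x, f x ∈ Set.Icc (0 : ℝ) 1)
    (hsupp : Function.support f ⊆ {x | ∀ i, x i ∈ Set.Icc (0 : ℝ) 1}) :
    ∃ (n : ℕ) (N : EuclideanSpace ℝ (Fin dx) → ℝ)
      (W₁ : Fin (2 * n * dx) → EuclideanSpace ℝ (Fin dx)) (b₁ : Fin (2 * n * dx) → ℝ)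
      (W₂ : Fin n → Fin (2 * n * dx) → ℝ) (b₂ : Fin n → ℝ)
      (a : Fin n → ℝ) (c : ℝ),
      (n : ℝ) ≤ ε ^ (-(dx : ℝ)) * (1 + (Real.sqrt dx * L) ^ p) ^ ((dx : ℝ) / p) + 1 ∧
      (∀ x, N x = c + ∑ j, a j *
        max (b₂ j + ∑ k, W₂ j k * max ((inner ℝ (W₁ k) x : ℝ) + b₁ k) 0) 0) ∧
      eLpNorm (fun x => N x - f x) (ENNReal.ofReal p) volume < ENNReal.ofReal ε := by
  have hp₀ : 0 < p := by linarith
  set m := ⌊√dx * L / (2 * ε)⌋₊ + 1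
  have hCε : L * (√dx / (2 * m)) < ε := by
    convert div_two_mul_floor_add_one_lt (√dx * L) hε using 1
    ring
  have hCp := Real.rpow_lt_rpow (by positivity) hCε hp₀
  obtain ⟨t, ht, hts⟩ := exists_pos_mul_lt (sub_pos.2 hCp) (dx * (m + 1) * 2)
  obtain ⟨W₁, b₁, W₂, b₂, a, hN⟩ := exists_threeLayerReLU_eq_gridNet m t f
  refine ⟨m ^ dx, gridNet m t f, W₁, b₁, W₂, b₂, a, 0,
    floor_add_one_pow_le (by positivity) hε hp₀ dx, fun x => (hN x).symm, ?_⟩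
  refine eLpNorm_lt_ofReal_of_lintegral_lt hp₀ hε <|
    (lintegral_enorm_gridNet_sub_rpow_le (Nat.succ_pos _) ht hL hp₀ hf hrange hsupp).trans_lt ?_
  rw [ENNReal.ofReal_lt_ofReal_iff (by positivity)]
  linarith

/-- Universal approximation in `L^p` by three-layer ReLU networks: every `L`-Lipschitz
function `f : ℝ^{dx} → [0,1]` supported in `[0,1]^{dx}` can be `ε`-approximated in
`L^p` by a three-layer ReLU network with widths `(2·n·dx, n)` where
`n = O(ε^{-dx})` (explicitly `n ≤ ε^{-dx}·(1 + (√dx·L)^p)^{dx/p} + 1`). -/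
theorem three_layer_universal_approximation
    (dx : ℕ) (hdx : 0 < dx) (L p ε : ℝ) (hL : 0 ≤ L) (hp : 1 ≤ p) (hε : 0 < ε)
    (f : EuclideanSpace ℝ (Fin dx) → ℝ)
    (hf : LipschitzWith (Real.toNNReal L) f)
    (hrange : ∀ x, f x ∈ Set.Icc (0 : ℝ) 1)
    (hsupp : Function.support f ⊆ {x | ∀ i, x i ∈ Set.Icc (0 : ℝ) 1}) :
    ∃ (n : ℕ) (N : EuclideanSpace ℝ (Fin dx) → ℝ)
      (W₁ : Fin (2 * n * dx) → EuclideanSpace ℝ (Fin dx)) (b₁ : Fin (2 * n * dx) → ℝ)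
      (W₂ : Fin n → Fin (2 * n * dx) → ℝ) (b₂ : Fin n → ℝ)
      (a : Fin n → ℝ) (c : ℝ),
      (n : ℝ) ≤ ε ^ (-(dx : ℝ)) * (1 + (Real.sqrt dx * L) ^ p) ^ ((dx : ℝ) / p) + 1 ∧
      (∀ x, N x = c + ∑ j, a j *
        max (b₂ j + ∑ k, W₂ j k * max ((inner ℝ (W₁ k) x : ℝ) + b₁ k) 0) 0) ∧
      eLpNorm (fun x => N x - f x) (ENNReal.ofReal p) volume < ENNReal.ofReal ε :=
  three_layer_universal_approximation_general dx L p ε hL hp hε f hf hrange hsupp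
end
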